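/- arXiv:1505.07615 — 4 statements merged into one kernel-verified Lean document; each statement's English description precedes it below -/
import Mathlib

section
/- Let (E, E₀) be a Frobenius pair, i.e. a strictly full, faithful and exact inclusion of Frobenius categories E₀ ↪ E mapping projective-injective objects of E₀ to projective-injective objects of E. Then the induced functor on stable categories ι : E₀/[proj-inj] → E/[proj-inj] is faithful: if a morphism f in E₀ factors in E through a projective-injective object of E, then f factors in E₀ through a projective-injective object of E₀. -/
/-!
STATEMENT 1: For a Frobenius pair `(E, E₀)`, the induced functor on stable
categories is faithful: a morphism of `E₀` factoring in `E` through a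
projective-injective object of `E` already factors in `E₀` through a
projective-injective object of `E₀`.
-/

open CategoryTheory

theorem stmt1 {C : Type*} [Category C]
    (E₀ : C → Prop)                        -- objects of the subcategory `E₀ ⊆ E`
    (PI : C → Prop)                        -- projective-injective objects of `E`
    (PI₀ : C → Prop)                       -- projective-injective objects of `E₀`
    (Infl : ∀ ⦃a b : C⦄, (a ⟶ b) → Prop)   -- inflations of `E`
    -- the inclusion maps projective-injectives of `E₀` to those of `E`
    (hPI : ∀ x, PI₀ x → PI x)
    -- projective-injective objects of `E` are injective: any morphism into them
    -- extends along inflations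
    (hinj : ∀ x, PI x → ∀ {a y : C} (ι : a ⟶ y), Infl ι →
      ∀ g : a ⟶ x, ∃ g' : y ⟶ x, ι ≫ g' = g)
    -- every object of `E₀` admits an inflation into a projective-injective of `E₀`
    (henough : ∀ a, E₀ a → ∃ (y : C) (ι : a ⟶ y), E₀ y ∧ PI₀ y ∧ Infl ι) :
    ∀ (a b : C), E₀ a → E₀ b → ∀ f : a ⟶ b,
      (∃ (x : C) (p : a ⟶ x) (q : x ⟶ b), PI x ∧ p ≫ q = f) →
      (∃ (y : C) (p : a ⟶ y) (q : y ⟶ b), E₀ y ∧ PI₀ y ∧ p ≫ q = f) := by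
  intro a b ha hb f ⟨x, p, q, hx, hpq⟩
  obtain ⟨y, ι, hy, hy0, hι⟩ := henough a ha
  obtain ⟨p', hp'⟩ := hinj x hx ι hι p
  exact ⟨y, ι, p' ≫ q, hy, hy0, by rw [← Category.assoc, hp', hpq]⟩
end

section
/- Let T be a triangulated category and J ⊆ T a full dense triangulated subcategory (every object of T is a direct summand of an object of J). Then for every object a of T, the object a ⊕ Σa (where Σ is the shift functor) lies in the essential image of J. -/
/-!
STATEMENT 2: If `J` is a full dense triangulated subcategory of a triangulated
category `T`, then for every object `a` of `T`, the object `a ⊕ Σa` lies in the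
essential image of `J`.
-/

open CategoryTheory Limits Pretriangulated

/-- Transport a distinguished triangle along isomorphisms of its three objects. -/
lemma my_transport {C : Type*} [Category C] [HasZeroObject C] [HasShift C ℤ]
    [Preadditive C] [∀ n : ℤ, (shiftFunctor C n).Additive] [Pretriangulated C]
    {T : Triangle C} (hT : T ∈ distTriang C) {X₁ X₂ X₃ : C}
    (e₁ : T.obj₁ ≅ X₁) (e₂ : T.obj₂ ≅ X₂) (e₃ : T.obj₃ ≅ X₃) :
    Triangle.mk (e₁.inv ≫ T.mor₁ ≫ e₂.hom) (e₂.inv ≫ T.mor₂ ≫ e₃.hom)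
      (e₃.inv ≫ T.mor₃ ≫ (shiftFunctor C (1 : ℤ)).map e₁.hom) ∈ distTriang C := by
  refine isomorphic_distinguished _ hT _ ?_
  exact Triangle.isoMk _ _ e₁.symm e₂.symm e₃.symm (by simp [Triangle.mk]) (by simp [Triangle.mk])
    (by simp [Triangle.mk, ← Functor.map_comp])

theorem stmt2 {C : Type*} [Category C] [HasZeroObject C] [HasShift C ℤ]
    [Preadditive C] [∀ n : ℤ, (shiftFunctor C n).Additive]
    [Pretriangulated C] [HasBinaryBiproducts C]
    (J : ObjectProperty C) [J.IsTriangulated]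
    -- `J` is dense: every object of `C` is a direct summand of an object of `J`
    (hdense : ∀ a : C, ∃ (j b : C), J j ∧ Nonempty ((a ⊞ b) ≅ j)) :
    ∀ a : C, ∃ j : C, J j ∧ Nonempty (j ≅ a ⊞ a⟦(1 : ℤ)⟧) := by
  intro a
  obtain ⟨j, b, hj, ⟨e⟩⟩ := hdense a
  -- the two triangles: `a⟦1⟧⟦-1⟧ → a → a ⊞ a⟦1⟧ → ⋯` and `b → b → 0 → ⋯`
  let Ta : Triangle C := (invRotate C).obj (binaryBiproductTriangle a (a⟦(1:ℤ)⟧))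
  have hTa : Ta ∈ distTriang C :=
    inv_rot_of_distTriang _ (binaryBiproductTriangle_distinguished a (a⟦(1:ℤ)⟧))
  let Tb : Triangle C := contractibleTriangle b
  have hTb : Tb ∈ distTriang C := contractible_distinguished b
  let K : WalkingPair → Triangle C := fun p => WalkingPair.casesOn p Ta Tb
  have hK : productTriangle K ∈ distTriang C :=
    productTriangle_distinguished K (by rintro (_ | _) <;> assumption)
  -- the product over `WalkingPair` is a binary biproduct
  let pp : ∀ (f : WalkingPair → C), (∏ᶜ f) ≅ f WalkingPair.left ⊞ f WalkingPair.right :=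
    fun f =>
      { hom := biprod.lift (Pi.π f WalkingPair.left) (Pi.π f WalkingPair.right)
        inv := Pi.lift (fun p => match p with
          | WalkingPair.left => biprod.fst
          | WalkingPair.right => biprod.snd)
        hom_inv_id := by ext p; rcases p with _ | _ <;> simp
        inv_hom_id := by ext <;> simp }
  -- identify the three objects of the product triangle
  let e₁ : (productTriangle K).obj₁ ≅ j :=
    pp _ ≪≫ biprod.mapIso ((shiftFunctorCompIsoId C (1:ℤ) (-1) (by norm_num)).app a)
      (Iso.refl b) ≪≫ e
  let e₂ : (productTriangle K).obj₂ ≅ j := pp _ ≪≫ e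
  let e₃ : (productTriangle K).obj₃ ≅ a ⊞ a⟦(1:ℤ)⟧ :=
    pp _ ≪≫ (isoBiprodZero (isZero_zero C)).symm
  -- the transported triangle `j ⟶ j ⟶ a ⊞ a⟦1⟧ ⟶ j⟦1⟧` is distinguished
  have h := J.ext_of_isTriangulatedClosed₃' _ (my_transport hK e₁ e₂ e₃) hj hj
  obtain ⟨Y, hY, ⟨i⟩⟩ := h
  exact ⟨Y, hY, ⟨i.symm⟩⟩
end

section
/- Let T be a tensor triangulated category, T_Z ⊆ T a thick tensor ideal with Verdier quotient q : T → T/T_Z. If T is equipped with the dimension function given by the opposite of the Krull codimension −codim_Krull on Spc(T), then the induced dimension function (−codim^T_Krull)|_U on T/T_Z coincides with the intrinsic dimension function −codim^{T/T_Z}_Krull on Spc(T/T_Z). -/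
/-!
STATEMENT 5: The dimension function `(−codim^T_Krull)|_U` on `T/T_Z` coincides
with the intrinsic `−codim^{T/T_Z}_Krull`.  We model the primes of `T` as a
partial order `P` (ordered by inclusion), the primes containing `T_Z` as an
upper set `S ⊆ P`, and the primes of `T/T_Z` as a partial order `Q` together
with the inclusion-preserving bijection `e : Q ≃o S` induced by `q`.  The Krull
codimension of a prime is the maximal length of a chain of primes strictly
containing it, i.e. `Set.chainHeight (Set.Ioi x)`; the statement is that these
agree under `e` (hence so do the two dimension functions `−codim`).
-/

theorem stmt5 {P : Type*} [PartialOrder P]     -- primes of `T`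
    {Q : Type*} [PartialOrder Q]               -- primes of `T/T_Z`
    (S : Set P)                                -- primes of `T` containing `T_Z`
    (hS : IsUpperSet S)
    (e : Q ≃o S) :                             -- the bijection induced by `q`
    ∀ x : Q, Set.chainHeight (Set.Ioi x) (· < ·) = Set.chainHeight (Set.Ioi ((e x : S) : P)) (· < ·) := by
  intro x
  have himg : (fun q : Q => ((e q : S) : P)) '' Set.Ioi x = Set.Ioi ((e x : S) : P) := by
    ext p
    constructor
    · rintro ⟨q, hq, rfl⟩
      exact Subtype.coe_lt_coe.mpr (e.strictMono hq)
    · intro hp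
      have hpS : p ∈ S := hS (le_of_lt hp) (e x).2
      refine ⟨e.symm ⟨p, hpS⟩, ?_, by simp⟩
      have : e x < ⟨p, hpS⟩ := Subtype.coe_lt_coe.mp hp
      simpa using e.symm.strictMono this
  rw [← himg]
  exact (Set.chainHeight_eq_of_relEmbedding (r := (· < ·)) (r' := (· < ·)) (s := Set.Ioi x)
    ⟨⟨fun q : Q => ((e q : S) : P), fun a b h => e.injective (Subtype.ext h)⟩, fun {a b} => by
    show ((e a : S) : P) < ((e b : S) : P) ↔ a < b
    rw [Subtype.coe_lt_coe, e.lt_iff_lt]⟩).symm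
end

section
/- Let T be a rigid tensor triangulated category with noetherian spectrum, equipped with a dimension function, and suppose that for some l the Verdier quotient T♮_(l)/T♮_(l−1) is idempotent complete. Then the natural inclusion K₀(T♮_(l)/T♮_(l−1)) ↪ K₀((T_(l)/T_(l−1))♮) is an isomorphism; consequently the ∩-cycle group and ∩-Chow group in dimension l coincide with the tensor triangular cycle group and Chow group: ∩CycΔ_l(T) = CycΔ_l(T) and ∩ChowΔ_l(T) = ChowΔ_l(T). -/
/-!
STATEMENT 18: Let `T` be a rigid tensor triangulated category with noetherian
spectrum and dimension function, and suppose that for some `l` the Verdier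
quotient `C = T♮_(l)/T♮_(l−1)` is idempotent complete.  Then the inclusion
`K₀(T♮_(l)/T♮_(l−1)) ↪ K₀((T_(l)/T_(l−1))♮)` is an isomorphism, and
consequently `∩CycΔ_l(T) = CycΔ_l(T)` and `∩ChowΔ_l(T) = ChowΔ_l(T)`.

We model the dense, fully faithful inclusion `ι : C ⥤ D` of
`C = T♮_(l)/T♮_(l−1)` into its idempotent completion
`D = (T♮_(l)/T♮_(l−1))♮ ≃ (T_(l)/T_(l−1))♮`, together with the `K₀`-groups
`KC = K₀(C)`, `KD = K₀(D)` given by class maps `γC`, `γD` (iso-invariant,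
additive on direct sums and generating), and the induced injective map
`j : KC →+ KD` (Thomason).  The conclusion: `j` is bijective, and hence every
subgroup of `KD` containing the image of `j` — such as the ∩-cycle group
`∩CycΔ_l(T) = Γ(im β)` — is all of `KD`; passing to the quotients defining the
Chow groups, `∩ChowΔ_l(T) = ChowΔ_l(T)`.
-/

open CategoryTheory Limits

theorem stmt18 {C D : Type*} [Category C] [Category D]
    [Preadditive D] [HasBinaryBiproducts D]
    (ι : C ⥤ D) [ι.Full] [ι.Faithful]
    [IsIdempotentComplete C]      -- the Verdier quotient is idempotent complete
    -- `ι` is dense: every object of `D` is a direct summand of an object from `C`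
    (hdense : ∀ d : D, ∃ (c : C) (d' : D), Nonempty ((d ⊞ d') ≅ ι.obj c))
    {KC KD : Type*} [AddCommGroup KC] [AddCommGroup KD]
    (γC : C → KC) (γD : D → KD)    -- the `K₀`-classes of objects
    (hγD_iso : ∀ {d d' : D}, (d ≅ d') → γD d = γD d')
    (hγD_add : ∀ d d' : D, γD (d ⊞ d') = γD d + γD d')
    -- `K₀(D)` is generated by the classes of objects
    (hγD_gen : ∀ g : KD, ∃ d d' : D, g = γD d - γD d')
    -- the map induced by `ι` on `K₀`, injective by Thomason's theorem
    (j : KC →+ KD) (hj : ∀ c : C, j (γC c) = γD (ι.obj c))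
    (hj_inj : Function.Injective j) :
    -- the inclusion `K₀(T♮_(l)/T♮_(l−1)) ↪ K₀((T_(l)/T_(l−1))♮)` is an isomorphism ...
    Function.Bijective j ∧
    -- ... hence any subgroup of `K₀((T_(l)/T_(l−1))♮) = CycΔ_l(T)` containing its
    -- image — in particular `∩CycΔ_l(T)` — is the whole group, and the quotients
    -- `∩ChowΔ_l(T)` and `ChowΔ_l(T)` agree
    (∀ S : AddSubgroup KD, j.range ≤ S → S = ⊤) := by
  have key : ∀ d : D, ∃ c : C, γD d = j (γC c) := by
    intro d
    obtain ⟨c, d', ⟨φ⟩⟩ := hdense d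
    obtain ⟨σ, π, hσπ⟩ : ∃ (σ : d ⟶ ι.obj c) (π : ι.obj c ⟶ d), σ ≫ π = 𝟙 d :=
      ⟨biprod.inl ≫ φ.hom, φ.inv ≫ biprod.fst, by simp⟩
    obtain ⟨q, hq⟩ := ι.map_surjective (π ≫ σ)
    have hq2 : q ≫ q = q := ι.map_injective (by
      simp only [Functor.map_comp, hq]
      rw [Category.assoc, ← Category.assoc σ π σ, hσπ, Category.id_comp])
    obtain ⟨c₁, i, e, hie, hei⟩ := IsIdempotentComplete.idempotents_split c q hq2
    refine ⟨c₁, ?_⟩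
    rw [hj]
    have hmap : ι.map e ≫ ι.map i = π ≫ σ := by rw [← Functor.map_comp, hei, hq]
    refine hγD_iso ⟨σ ≫ ι.map e, ι.map i ≫ π, ?_, ?_⟩
    · rw [Category.assoc, reassoc_of% hmap, reassoc_of% hσπ, hσπ]
    · rw [Category.assoc]
      slice_lhs 2 3 => rw [← hq]
      rw [← Functor.map_comp, ← Functor.map_comp, ← hei]
      rw [show i ≫ (e ≫ i) ≫ e = (i ≫ e) ≫ (i ≫ e) by simp, hie]
      simp
  have hsurj : Function.Surjective j := by
    intro g
    obtain ⟨d, d', rfl⟩ := hγD_gen g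
    obtain ⟨c, hc⟩ := key d
    obtain ⟨c', hc'⟩ := key d'
    exact ⟨γC c - γC c', by rw [map_sub, hc, hc']⟩
  refine ⟨⟨hj_inj, hsurj⟩, fun S hS => ?_⟩
  rw [eq_top_iff]
  intro x _
  obtain ⟨y, rfl⟩ := hsurj x
  exact hS ⟨y, rfl⟩
end
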